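/- Let t ≥ 2, let M₁, …, M_t be nonsingular 2×2 integer matrices, and let 𝒮₁, …, 𝒮_{t-1} ⊆ GL(2,ℤ) be regular subsets. Then the set {A ∈ GL(2,ℤ) : there exist A₁ ∈ 𝒮₁, …, A_{t-1} ∈ 𝒮_{t-1} with A₁ M₁ A₂ M₂ ⋯ A_{t-1} M_{t-1} A = M_t} is a regular subset of GL(2,ℤ). -/

import Mathlib

/-- 2×2 integer matrices. -/
abbrev M2 := Matrix (Fin 2) (Fin 2) ℤ

/-- A matrix belongs to GL(2,ℤ), i.e. has determinant ±1. -/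
def IsGL (A : M2) : Prop := A.det = 1 ∨ A.det = -1

/-- The four-letter alphabet Σ = {X, N, S, R}. -/
inductive Alph : Type | X | N | S | R
deriving DecidableEq

instance instFintypeAlph : Fintype Alph where
  elems := {Alph.X, Alph.N, Alph.S, Alph.R}
  complete := by intro x; cases x <;> simp

/-- The matrices assigned to letters of Σ. -/
def phiLetter : Alph → M2
  | Alph.X => !![-1, 0; 0, -1]
  | Alph.N => !![1, 0; 0, -1]
  | Alph.S => !![0, -1; 1, 0]
  | Alph.R => !![0, -1; 1, 1]

/-- The monoid homomorphism φ : Σ* → GL(2,ℤ) (valued in matrices). -/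
def phi (w : List Alph) : M2 := (w.map phiLetter).prod

/-- A word over Σ is canonical: no subword SS or RRR, the letter N occurs only in
the first position, and X occurs only in the first position or immediately after N. -/
def Canonical (w : List Alph) : Prop :=
  ¬ [Alph.S, Alph.S] <:+: w ∧
  ¬ [Alph.R, Alph.R, Alph.R] <:+: w ∧
  (∀ i : Fin w.length, w.get i = Alph.N → (i : ℕ) = 0) ∧
  (∀ i : Fin w.length, w.get i = Alph.X →
      (i : ℕ) = 0 ∨ ((i : ℕ) = 1 ∧ w.get ⟨0, Nat.lt_of_le_of_lt (Nat.zero_le _) i.isLt⟩ = Alph.N))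

/-- A subset of GL(2,ℤ) is regular if it is the image under φ of a regular language. -/
def RegularSubset (S : Set M2) : Prop :=
  ∃ L : Language Alph, L.IsRegular ∧ phi '' L = S

/-!
Path products of a finite graph whose edges carry matrices of GL(2,ℤ) form a regular subset:
since `S` and `T` generate SL(2,ℤ), every label is `φ` of a word, and the words spelt along paths
are recognised by an ε-NFA with finitely many reachable states.

The products `A₁ M₁ ⋯ A_k M_k` with `Aᵢ ∈ 𝒮ᵢ` are the path products `Z` of a chain of
Myhill–Nerode automata of languages `Lᵢ` with `φ(Lᵢ) = 𝒮ᵢ`, joined by edges labelled `Mᵢ`, and for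
`A ∈ GL(2,ℤ)` the equation `Z A = M_t` reads `A X₀ Z = X₁` with `X₀ = adj(M_t)`,
`X₁ = det(M_t) • 1`. Write the partial products `X₀ g₁ ⋯ gⱼ` of a path as `Vⱼ Hⱼ` with
`Vⱼ ∈ GL(2,ℤ)` and `Hⱼ` a Hermite normal form for `j ≥ 1`, and `V₀ = 1`, `H₀ = X₀`. Then
`A = (X₁ Hₙ⁻¹)(Vₙ⁻¹ Vₙ₋₁) ⋯ (V₁⁻¹ V₀)`, where `Vⱼ⁻¹ Vⱼ₋₁ = Hⱼ (Hⱼ₋₁ gⱼ)⁻¹` lies in GL(2,ℤ) and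
depends only on `Hⱼ₋₁`, `gⱼ`, `Hⱼ`. Every `det Hⱼ` divides `det X₁`, so only finitely many `Hⱼ`
occur, and the solutions `A` are the path products of a finite GL(2,ℤ)-labelled graph on pairs
(vertex, `H`), traversed backwards.
-/

open scoped MatrixGroups

@[simp] lemma phi_nil : phi [] = 1 := rfl

@[simp] lemma phi_cons (a : Alph) (w : List Alph) : phi (a :: w) = phiLetter a * phi w := by
  simp [phi]

lemma phi_append (u v : List Alph) : phi (u ++ v) = phi u * phi v := by
  simp [phi]

lemma isGL_one : IsGL 1 := Or.inl Matrix.det_one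

lemma IsGL.mul {A B : M2} (hA : IsGL A) (hB : IsGL B) : IsGL (A * B) := by
  rcases hA with hA | hA <;> rcases hB with hB | hB <;> simp [IsGL, Matrix.det_mul, hA, hB]

lemma IsGL.isUnit_det {A : M2} (hA : IsGL A) : IsUnit A.det := by
  rcases hA with h | h <;> simp [h]

lemma isGL_coe_SL (s : SL(2, ℤ)) : IsGL s := Or.inl s.det_coe

open ModularGroup Matrix.SpecialLinearGroup in
lemma exists_phi_eq_coe (A : SL(2, ℤ)) : ∃ w, phi w = A := by
  have hA : A ∈ Subgroup.closure {S, T} := by rw [SpecialLinearGroup.SL2Z_generators]; trivial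
  induction hA using Subgroup.closure_induction_left with
  | one => exact ⟨[], rfl⟩
  | mul_left x hx y _ ih =>
    obtain ⟨w, hw⟩ := ih
    rcases hx with rfl | rfl
    · exact ⟨Alph.S :: w, by simp [hw, coe_S, phiLetter]⟩
    · exact ⟨[Alph.S, Alph.S, Alph.S, Alph.R] ++ w, by
        rw [phi_append, hw, coe_mul, coe_T]; simp [phiLetter]⟩
  | inv_mul_cancel x hx y _ ih =>
    obtain ⟨w, hw⟩ := ih
    rcases hx with rfl | rfl
    · exact ⟨[Alph.S, Alph.S, Alph.S] ++ w, by
        rw [phi_append, hw, coe_mul, coe_inv, coe_S]; simp [phiLetter, Matrix.adjugate_fin_two]⟩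
    · exact ⟨[Alph.R, Alph.R, Alph.R, Alph.R, Alph.R, Alph.S] ++ w, by
        rw [phi_append, hw, coe_mul, coe_T_inv]; simp [phiLetter]⟩

lemma phiLetter_N_mul_self : phiLetter Alph.N * phiLetter Alph.N = 1 := by
  simp [phiLetter, Matrix.one_fin_two]

lemma exists_phi_eq {A : M2} (hA : IsGL A) : ∃ w, phi w = A := by
  rcases hA with h | h
  · exact exists_phi_eq_coe ⟨A, h⟩
  · obtain ⟨w, hw⟩ := exists_phi_eq_coe ⟨phiLetter Alph.N * A, by
      rw [Matrix.det_mul, h]; simp [phiLetter]⟩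
    refine ⟨Alph.N :: w, ?_⟩
    rw [phi_cons, hw, Matrix.SpecialLinearGroup.coe_mk, ← mul_assoc, phiLetter_N_mul_self, one_mul]

lemma finite_setOf_isSuffix {α : Type*} (w : List α) : {l | l <:+ w}.Finite :=
  (List.finite_toSet w.tails).subset fun _ hl => (List.mem_tails _ _).2 hl

theorem εNFA.isRegular_accepts_of_finite_invariant {α σ : Type*} (M : εNFA α σ) (P : Set σ)
    (hP : P.Finite) (hstart : M.start ⊆ P) (hstep : ∀ s ∈ P, ∀ a, M.step s a ⊆ P) :
    M.accepts.IsRegular := by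
  have hclosure : ∀ S ⊆ P, M.εClosure S ⊆ P := by
    intro S hS s hs
    induction hs with
    | base s hs => exact hS hs
    | step s t ht _ ih => exact hstep s ih none ht
  have heval : ∀ x, M.toNFA.eval x ⊆ P := by
    intro x
    induction x using List.reverseRecOn with
    | nil => exact hclosure _ hstart
    | append_singleton x a ih =>
      rw [NFA.eval_append_singleton]
      intro s hs
      obtain ⟨t, ht, hs⟩ := NFA.mem_stepSet.1 hs
      exact hclosure _ (hstep t (ih ht) (some a)) hs
  refine Language.IsRegular.of_finite_range_leftQuotient
    ((hP.finite_subsets.image M.toNFA.acceptsFrom).subset ?_)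
  rintro _ ⟨x, rfl⟩
  refine ⟨M.toNFA.eval x, heval x, ?_⟩
  ext y
  rw [← εNFA.toNFA_correct, Language.mem_leftQuotient, NFA.accepts_eq_acceptsFrom_start,
    NFA.append_mem_acceptsFrom]
  rfl

section LabelledPath

variable {V : Type*}

inductive LabelledPath (E : Set (V × M2 × V)) : V → V → M2 → Prop
  | refl (v : V) : LabelledPath E v v 1
  | cons {u v w : V} {g P : M2} : (u, g, v) ∈ E → LabelledPath E v w P → LabelledPath E u w (g * P)

namespace LabelledPath

variable {E : Set (V × M2 × V)} {u v w : V} {g P Q : M2}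

lemma single (h : (u, g, v) ∈ E) : LabelledPath E u v g := by
  simpa using cons h (refl v)

lemma trans (h₁ : LabelledPath E u v P) (h₂ : LabelledPath E v w Q) :
    LabelledPath E u w (P * Q) := by
  induction h₁ with
  | refl => simpa using h₂
  | cons he _ ih => rw [mul_assoc]; exact cons he (ih h₂)

lemma snoc (h : LabelledPath E u v P) (he : (v, g, w) ∈ E) : LabelledPath E u w (P * g) :=
  h.trans (single he)

lemma isGL (hE : ∀ e ∈ E, IsGL e.2.1) (h : LabelledPath E u v P) : IsGL P := by
  induction h with
  | refl => exact isGL_one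
  | cons he _ ih => exact (hE _ he).mul ih

end LabelledPath

variable {E : Set (V × M2 × V)} {word : M2 → List Alph} {v₀ v₁ : V}

/-- In the state `(v, l)` the automaton stands at the vertex `v` and still has to read `l`, the
rest of the word chosen for the label of the edge it is traversing. -/
def labelledPathεNFA (E : Set (V × M2 × V)) (word : M2 → List Alph) (v₀ v₁ : V) :
    εNFA Alph (V × List Alph) where
  step p
    | some a => {p' | p'.1 = p.1 ∧ p.2 = a :: p'.2}
    | none => {p' | p.2 = [] ∧ ∃ g, (p.1, g, p'.1) ∈ E ∧ p'.2 = word g}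
  start := {(v₀, [])}
  accept := {(v₁, [])}

lemma labelledPathεNFA_isPath_pending (v : V) (l : List Alph) :
    (labelledPathεNFA E word v₀ v₁).IsPath (v, l) (v, []) (l.map some) := by
  induction l with
  | nil => exact .nil _
  | cons a l ih => exact .cons (v, l) _ _ _ _ ⟨rfl, rfl⟩ ih

lemma LabelledPath.exists_isPath (hword : ∀ e ∈ E, phi (word e.2.1) = e.2.1) {v : V} {P : M2}
    (h : LabelledPath E v v₁ P) :
    ∃ x, (labelledPathεNFA E word v₀ v₁).IsPath (v, []) (v₁, []) x ∧ phi x.reduceOption = P := by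
  induction h with
  | refl => exact ⟨[], .nil _, rfl⟩
  | @cons u v w g P he _ ih =>
    obtain ⟨x, hx, rfl⟩ := ih
    refine ⟨none :: ((word g).map some ++ x), .cons (v, word g) _ _ _ _ ⟨rfl, g, he, rfl⟩
      ((εNFA.isPath_append _).2 ⟨_, labelledPathεNFA_isPath_pending v (word g), hx⟩), ?_⟩
    simp [phi_append, hword _ he, List.reduceOption]

lemma exists_labelledPath_of_isPath (hword : ∀ e ∈ E, phi (word e.2.1) = e.2.1)
    {p : V × List Alph} {x : List (Option Alph)}
    (h : (labelledPathεNFA E word v₀ v₁).IsPath p (v₁, []) x) :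
    ∃ P, LabelledPath E p.1 v₁ P ∧ phi p.2 * P = phi x.reduceOption := by
  generalize hq : ((v₁, []) : V × List Alph) = q at h
  induction h with
  | nil p => subst hq; exact ⟨1, .refl _, by simp⟩
  | cons t s u a x hstep _ ih =>
    obtain ⟨P, hP, hPx⟩ := ih hq
    cases a with
    | none =>
      obtain ⟨hs, g, he, ht⟩ := hstep
      refine ⟨g * P, .cons he hP, ?_⟩
      rw [hs, List.reduceOption_cons_of_none, ← hPx, ht, hword _ he, phi_nil, one_mul]
    | some a =>
      obtain ⟨ht, hs⟩ := hstep
      refine ⟨P, ht ▸ hP, ?_⟩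
      rw [hs, List.reduceOption_cons_of_some, phi_cons, phi_cons, mul_assoc, hPx]

end LabelledPath

theorem regularSubset_setOf_labelledPath {V : Type*} (E : Set (V × M2 × V)) (hE : E.Finite)
    (hGL : ∀ e ∈ E, IsGL e.2.1) (v₀ v₁ : V) : RegularSubset {P | LabelledPath E v₀ v₁ P} := by
  have hwords : ∀ g : M2, ∃ w, IsGL g → phi w = g := by
    intro g
    by_cases h : IsGL g
    · exact (exists_phi_eq h).imp fun _ hw _ => hw
    · exact ⟨[], fun h' => absurd h' h⟩
  choose word hword using hwords
  have hwordE : ∀ e ∈ E, phi (word e.2.1) = e.2.1 := fun e he => hword _ (hGL e he)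
  let N := labelledPathεNFA E word v₀ v₁
  let pending : Set (V × List Alph) :=
    insert (v₀, []) (⋃ e ∈ E, (e.2.2, ·) '' {l | l <:+ word e.2.1})
  have hpending : pending.Finite :=
    (hE.biUnion fun e _ => (finite_setOf_isSuffix _).image _).insert _
  refine ⟨N.accepts, N.isRegular_accepts_of_finite_invariant pending hpending ?_ ?_, ?_⟩
  · simp [N, pending, labelledPathεNFA]
  · rintro s hs (_ | a) t ht
    · obtain ⟨-, g, he, ht⟩ := ht
      exact Or.inr (Set.mem_biUnion he ⟨t.2, ht ▸ List.suffix_refl _, rfl⟩)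
    · obtain ⟨ht₁, ht₂⟩ := ht
      rcases hs with rfl | hs
      · simp at ht₂
      · obtain ⟨e, he, l, hl, rfl⟩ := Set.mem_iUnion₂.1 hs
        refine Or.inr (Set.mem_biUnion he ⟨t.2, ?_, Prod.ext ht₁.symm rfl⟩)
        obtain rfl : l = a :: t.2 := ht₂
        exact (List.suffix_cons _ _).trans hl
  · ext P
    constructor
    · rintro ⟨_, hmem, rfl⟩
      obtain ⟨_, _, x, rfl, rfl, rfl, hx⟩ := (εNFA.mem_accepts_iff_exists_path _).1 hmem
      simpa using exists_labelledPath_of_isPath hwordE hx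
    · intro hP
      obtain ⟨x, hx, rfl⟩ := LabelledPath.exists_isPath hwordE (v₀ := v₀) hP
      exact ⟨_, (εNFA.mem_accepts_iff_exists_path _).2 ⟨_, _, x, rfl, rfl, rfl, hx⟩, rfl⟩

/-- `FixedDetMatrices.reps d` is the set of Hermite normal forms of determinant `d`. -/
def cosetReps (N : ℤ) : Set M2 := ⋃ d ∈ N.divisors, Subtype.val '' FixedDetMatrices.reps d

lemma finite_cosetReps (N : ℤ) : (cosetReps N).Finite :=
  N.divisors.finite_toSet.biUnion fun d _ => (Set.toFinite (FixedDetMatrices.reps d)).image _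

lemma det_ne_zero_of_mem_cosetReps {N : ℤ} {H : M2} (hH : H ∈ cosetReps N) : H.det ≠ 0 := by
  obtain ⟨d, hd, B, -, rfl⟩ := Set.mem_iUnion₂.1 hH
  rw [B.2]
  rintro rfl
  simp at hd

open ModularGroup in
lemma exists_eq_SL_mul_mem_cosetReps {N : ℤ} (hN : N ≠ 0) {Z : M2} (hZ : Z.det ∣ N) :
    ∃ s : SL(2, ℤ), ∃ H ∈ cosetReps N, Z = s * H := by
  have hZ0 : Z.det ≠ 0 := by rintro h; rw [h, zero_dvd_iff] at hZ; exact hN hZ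
  suffices ∃ s : SL(2, ℤ), ∃ B ∈ FixedDetMatrices.reps Z.det,
      (⟨Z, rfl⟩ : FixedDetMatrix _ _ _) = s • B by
    obtain ⟨s, B, hB, h⟩ := this
    refine ⟨s, B.1, Set.mem_biUnion (by simp [hZ, hN]) ⟨B, hB, rfl⟩, ?_⟩
    rw [← FixedDetMatrices.smul_coe, ← h]
  refine FixedDetMatrices.induction_on (A := ⟨Z, rfl⟩)
    (C := fun A => ∃ s : SL(2, ℤ), ∃ B ∈ FixedDetMatrices.reps Z.det, A = s • B) hZ0
    (fun B h₁ h₂ h₃ h₄ => ⟨1, B, ⟨h₁, h₂, h₃, h₄⟩, (one_smul _ _).symm⟩) ?_ ?_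
  · rintro _ ⟨s, B, hB, rfl⟩
    exact ⟨S * s, B, hB, (mul_smul _ _ _).symm⟩
  · rintro _ ⟨s, B, hB, rfl⟩
    exact ⟨T * s, B, hB, (mul_smul _ _ _).symm⟩

lemma eq_of_mul_eq_mul_of_det_ne_zero {U U' Y : M2} (hY : Y.det ≠ 0) (h : U * Y = U' * Y) :
    U = U' := by
  have := congrArg (· * Y.adjugate) h
  simp only [mul_assoc, Matrix.mul_adjugate, Matrix.mul_smul, mul_one] at this
  exact smul_right_injective _ hY this

section CosetGraph

variable {V : Type*} (E : Set (V × M2 × V)) (X₀ X₁ : M2) (v₁ : V)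

/-- The vertex `(v, X)` stands for `v` together with the coset `GL(2,ℤ) · X`. A lifted edge runs
against an edge `(v, g, v')` of `E`, so that a path from `(v', X')` to `(v, X)` with label `U`
witnesses an `E`-path from `v` to `v'` with product `Z` and `U * X * Z = X'`; the `switch` edges
let such paths start at `(v₁, X₁)` although `X₁` need not be a coset representative. -/
inductive CosetEdge : V × M2 → M2 → V × M2 → Prop
  | lift {v v' : V} {g X X' U : M2} : (v, g, v') ∈ E → X ∈ insert X₀ (cosetReps X₁.det) →
      X' ∈ cosetReps X₁.det → IsGL U → U * X * g = X' → CosetEdge (v', X') U (v, X)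
  | switch {X U : M2} : X ∈ insert X₀ (cosetReps X₁.det) → IsGL U → U * X = X₁ →
      CosetEdge (v₁, X₁) U (v₁, X)

def cosetEdges : Set ((V × M2) × M2 × (V × M2)) := {e | CosetEdge E X₀ X₁ v₁ e.1 e.2.1 e.2.2}

variable {E X₀ X₁ v₁}

lemma isGL_of_mem_cosetEdges : ∀ e ∈ cosetEdges E X₀ X₁ v₁, IsGL e.2.1 := by
  rintro ⟨p, U, q⟩ (⟨-, -, -, hU, -⟩ | ⟨-, hU, -⟩) <;> exact hU

lemma finite_cosetEdges (hE : E.Finite) (hX₁ : X₁.det ≠ 0) : (cosetEdges E X₀ X₁ v₁).Finite := by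
  let R := insert X₀ (cosetReps X₁.det)
  let R' := insert X₁ (cosetReps X₁.det)
  have hfin : (insert (v₁, 1, v₁) E ×ˢ R ×ˢ R').Finite :=
    (hE.insert _).prod (((finite_cosetReps _).insert _).prod ((finite_cosetReps _).insert _))
  -- the label of a lifted edge is determined by its endpoints and the underlying edge
  refine (hfin.biUnion (t := fun t => {e : (V × M2) × M2 × (V × M2) | e.1 = (t.1.2.2, t.2.2) ∧
      e.2.2 = (t.1.1, t.2.1) ∧ e.2.1 * (t.2.1 * t.1.2.1) = t.2.2}) fun t ht => ?_).subset ?_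
  · refine Set.Subsingleton.finite ?_
    rintro ⟨p, U, q⟩ ⟨rfl, rfl, hU⟩ ⟨p', U', q'⟩ ⟨rfl, rfl, hU'⟩
    simp only at hU hU'
    have hdet : t.2.2.det ≠ 0 := by
      rcases ht.2.2 with h | h
      · rw [h]; exact hX₁
      · exact det_ne_zero_of_mem_cosetReps h
    have hY : (t.2.1 * t.1.2.1).det ≠ 0 := by
      rw [← hU, Matrix.det_mul] at hdet; exact right_ne_zero_of_mul hdet
    rw [eq_of_mul_eq_mul_of_det_ne_zero hY (hU.trans hU'.symm)]
  · rintro ⟨p, U, q⟩ (@⟨v, v', g, X, X', U, he, hX, hX', -, h⟩ | @⟨X, U, hX, -, h⟩)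
    · exact Set.mem_biUnion (x := ((v, g, v'), X, X')) ⟨Set.mem_insert_of_mem _ he, hX,
        Set.mem_insert_of_mem _ hX'⟩ ⟨rfl, rfl, by rw [← mul_assoc, h]⟩
    · exact Set.mem_biUnion (x := ((v₁, 1, v₁), X, X₁)) ⟨Set.mem_insert _ _, hX,
        Set.mem_insert _ _⟩ ⟨rfl, rfl, by rw [mul_one, h]⟩

lemma exists_labelledPath_of_cosetEdges {p q : V × M2} {U : M2}
    (h : LabelledPath (cosetEdges E X₀ X₁ v₁) p q U) :
    ∃ Z, LabelledPath E q.1 p.1 Z ∧ U * q.2 * Z = p.2 := by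
  induction h with
  | refl p => exact ⟨1, .refl _, by simp⟩
  | cons he _ ih =>
    obtain ⟨Z, hZ, hUZ⟩ := ih
    rcases he with ⟨he, -, -, -, h⟩ | ⟨-, -, h⟩ <;> dsimp only at hZ hUZ h ⊢
    · refine ⟨Z * _, hZ.snoc he, ?_⟩
      rw [← h, ← hUZ]
      simp only [mul_assoc]
    · refine ⟨Z, hZ, ?_⟩
      rw [← h, ← hUZ]
      simp only [mul_assoc]

lemma LabelledPath.lift_cosetEdges {v : V} {Z : M2} (hX₁ : X₁.det ≠ 0) (h : LabelledPath E v v₁ Z)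
    {X W : M2} (hX : X ∈ insert X₀ (cosetReps X₁.det)) (hW : IsGL W) (hWXZ : W * X * Z = X₁) :
    LabelledPath (cosetEdges E X₀ X₁ v₁) (v₁, X₁) (v, X) W := by
  induction h generalizing X W with
  | refl => exact .single (CosetEdge.switch hX hW (by simpa using hWXZ))
  | @cons v v₂ w g Z he _ ih =>
    have hdvd : (X * g).det ∣ X₁.det :=
      ⟨W.det * Z.det, by rw [← hWXZ]; simp only [Matrix.det_mul]; ring⟩
    obtain ⟨s, H, hH, hXg⟩ := exists_eq_SL_mul_mem_cosetReps hX₁ hdvd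
    have hpath := ih (Set.mem_insert_of_mem _ hH) (hW.mul (isGL_coe_SL s))
      (by rw [← hWXZ, mul_assoc W, ← hXg]; simp only [mul_assoc])
    have hedge : CosetEdge E X₀ X₁ w (v₂, H) ↑s⁻¹ (v, X) := by
      refine .lift he hX hH (isGL_coe_SL _) ?_
      rw [mul_assoc, hXg, ← mul_assoc, ← Matrix.SpecialLinearGroup.coe_mul, inv_mul_cancel,
        Matrix.SpecialLinearGroup.coe_one, one_mul]
    have hW' : W * ↑s * ↑s⁻¹ = W := by
      rw [mul_assoc, ← Matrix.SpecialLinearGroup.coe_mul, mul_inv_cancel,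
        Matrix.SpecialLinearGroup.coe_one, mul_one]
    exact hW' ▸ hpath.snoc hedge

end CosetGraph

theorem regularSubset_setOf_mul_labelledPath_eq {V : Type*} (E : Set (V × M2 × V))
    (hE : E.Finite) (v₀ v₁ : V) (X₀ X₁ : M2) (hX₁ : X₁.det ≠ 0) :
    RegularSubset {U | IsGL U ∧ ∃ Z, LabelledPath E v₀ v₁ Z ∧ U * X₀ * Z = X₁} := by
  convert regularSubset_setOf_labelledPath (cosetEdges E X₀ X₁ v₁) (finite_cosetEdges hE hX₁)
    isGL_of_mem_cosetEdges (v₁, X₁) (v₀, X₀) using 1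
  ext U
  constructor
  · rintro ⟨hU, Z, hZ, h⟩
    exact hZ.lift_cosetEdges hX₁ (Set.mem_insert _ _) hU h
  · intro h
    exact ⟨h.isGL isGL_of_mem_cosetEdges, exists_labelledPath_of_cosetEdges h⟩

section Chain

open Pointwise

variable (ps : List (Language Alph × M2))

/-- The vertex `(K, M) :: rest` means: read a word of the residual language `K`, then multiply by
`M`, then continue with the factors `rest`. -/
inductive ChainEdge : List (Language Alph × M2) → M2 → List (Language Alph × M2) → Prop
  | letter {L : Language Alph} {M : M2} {rest : List (Language Alph × M2)}
      (hs : (L, M) :: rest <:+ ps) (u : List Alph) (a : Alph) :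
      ChainEdge ((L.leftQuotient u, M) :: rest) (phiLetter a)
        ((L.leftQuotient (u ++ [a]), M) :: rest)
  | next {L : Language Alph} {M : M2} {rest : List (Language Alph × M2)}
      (hs : (L, M) :: rest <:+ ps) {u : List Alph} (hu : u ∈ L) :
      ChainEdge ((L.leftQuotient u, M) :: rest) M rest

def chainEdges : Set (List (Language Alph × M2) × M2 × List (Language Alph × M2)) :=
  {e | ChainEdge ps e.1 e.2.1 e.2.2}

def chainProduct (l : List (Language Alph × M2)) : Set M2 :=
  (l.map fun p => phi '' p.1 * {p.2}).prod

variable {ps}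

lemma mem_chainProduct_cons {K : Language Alph} {M Z : M2} {rest : List (Language Alph × M2)} :
    Z ∈ chainProduct ((K, M) :: rest) ↔ ∃ w ∈ K, ∃ Z' ∈ chainProduct rest, phi w * M * Z' = Z := by
  simp only [chainProduct, List.map_cons, List.prod_cons, Set.mem_mul, Set.mem_singleton_iff]
  constructor
  · rintro ⟨_, ⟨_, ⟨w, hw, rfl⟩, _, rfl, rfl⟩, Z', hZ', rfl⟩
    exact ⟨w, hw, Z', hZ', rfl⟩
  · rintro ⟨w, hw, Z', hZ', rfl⟩
    exact ⟨_, ⟨_, ⟨w, hw, rfl⟩, _, rfl, rfl⟩, Z', hZ', rfl⟩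

lemma mem_chainProduct_ofFn {n : ℕ} {L : Fin n → Language Alph} {M : Fin n → M2} {Z : M2} :
    Z ∈ chainProduct (List.ofFn fun i => (L i, M i)) ↔
      ∃ A : Fin n → M2, (∀ i, A i ∈ phi '' L i) ∧ (List.ofFn fun i => A i * M i).prod = Z := by
  simp only [chainProduct, List.map_ofFn, Function.comp_def, Set.mul_singleton,
    Set.mem_prod_list_ofFn]
  constructor
  · rintro ⟨x, rfl⟩
    choose A hA hx using fun i => (x i).2
    exact ⟨A, hA, by simp only [hx]⟩
  · rintro ⟨A, hA, rfl⟩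
    exact ⟨fun i => ⟨A i * M i, A i, hA i, rfl⟩, rfl⟩

lemma finite_chainEdges (hps : ∀ p ∈ ps, p.1.IsRegular) : (chainEdges ps).Finite := by
  let vertices := ⋃ p ∈ {p | p ∈ ps}, ⋃ rest ∈ {r | r <:+ ps},
    (fun K => (K, p.2) :: rest) '' Set.range p.1.leftQuotient
  have hvertices : vertices.Finite := (List.finite_toSet ps).biUnion fun p hp =>
    (finite_setOf_isSuffix ps).biUnion fun _ _ => (hps p hp).finite_range_leftQuotient.image _
  have hlabels : (Set.range phiLetter ∪ Prod.snd '' {p | p ∈ ps}).Finite :=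
    (Set.finite_range _).union ((List.finite_toSet ps).image _)
  refine (hvertices.prod (hlabels.prod (hvertices.union (finite_setOf_isSuffix ps)))).subset ?_
  have hmem : ∀ {L M rest} (u : List Alph), (L, M) :: rest <:+ ps →
      (L.leftQuotient u, M) :: rest ∈ vertices := fun u hs =>
    Set.mem_biUnion (hs.subset List.mem_cons_self)
      (Set.mem_biUnion ((List.suffix_cons _ _).trans hs) ⟨_, ⟨u, rfl⟩, rfl⟩)
  rintro ⟨l, g, l'⟩ he
  change ChainEdge ps l g l' at he
  rcases he with ⟨hs, u, a⟩ | ⟨hs, hu⟩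
  · exact ⟨hmem u hs, Or.inl ⟨a, rfl⟩, Or.inl (hmem _ hs)⟩
  · exact ⟨hmem _ hs, Or.inr ⟨_, hs.subset List.mem_cons_self, rfl⟩,
      Or.inr ((List.suffix_cons _ _).trans hs)⟩

lemma mem_chainProduct_of_labelledPath {l : List (Language Alph × M2)} {Z : M2}
    (h : LabelledPath (chainEdges ps) l [] Z) : Z ∈ chainProduct l := by
  generalize hend : ([] : List (Language Alph × M2)) = l' at h
  induction h with
  | refl => subst hend; exact Set.mem_one.2 rfl
  | @cons l l' _ g _ he _ ih =>
    have hmem := ih hend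
    change ChainEdge ps l g l' at he
    rcases he with ⟨hs, u, a⟩ | ⟨hs, hu⟩
    · obtain ⟨w, hw, Z', hZ', rfl⟩ := mem_chainProduct_cons.1 hmem
      refine mem_chainProduct_cons.2 ⟨a :: w, ?_, Z', hZ', by simp [mul_assoc]⟩
      simpa [Language.mem_leftQuotient] using hw
    · exact mem_chainProduct_cons.2 ⟨[], by simpa [Language.mem_leftQuotient] using hu, _, hmem,
        by simp⟩

lemma labelledPath_chainEdges_of_mem_leftQuotient {L : Language Alph} {M : M2}
    {rest : List (Language Alph × M2)} (hs : (L, M) :: rest <:+ ps) (w : List Alph) {u : List Alph}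
    (hw : w ∈ L.leftQuotient u) :
    LabelledPath (chainEdges ps) ((L.leftQuotient u, M) :: rest) rest (phi w * M) := by
  induction w generalizing u with
  | nil =>
    have hu : u ∈ L := by simpa [Language.mem_leftQuotient] using hw
    simpa using LabelledPath.single (E := chainEdges ps) (ChainEdge.next hs hu)
  | cons a w ih =>
    have hpath := ih (u := u ++ [a]) (by simpa [Language.mem_leftQuotient] using hw)
    rw [phi_cons, mul_assoc]
    exact .cons (ChainEdge.letter hs u a) hpath

lemma labelledPath_of_mem_chainProduct {l : List (Language Alph × M2)} (hl : l <:+ ps) {Z : M2}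
    (hZ : Z ∈ chainProduct l) : LabelledPath (chainEdges ps) l [] Z := by
  induction l generalizing Z with
  | nil => obtain rfl := Set.mem_one.1 hZ; exact .refl _
  | cons p rest ih =>
    obtain ⟨w, hw, Z', hZ', rfl⟩ := mem_chainProduct_cons.1 hZ
    exact (labelledPath_chainEdges_of_mem_leftQuotient hl w (u := []) hw).trans
      (ih ((List.suffix_cons _ _).trans hl) hZ')

lemma labelledPath_chainEdges_iff {Z : M2} :
    LabelledPath (chainEdges ps) ps [] Z ↔ Z ∈ chainProduct ps :=
  ⟨mem_chainProduct_of_labelledPath, labelledPath_of_mem_chainProduct (List.suffix_refl ps)⟩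

end Chain

lemma mul_eq_iff_mul_adjugate_mul_eq {A Z Mt : M2} (hA : IsGL A) (hMt : Mt.det ≠ 0) :
    Z * A = Mt ↔ A * Mt.adjugate * Z = Mt.det • 1 := by
  constructor
  · rintro rfl
    calc A * (Z * A).adjugate * Z = (A * A.adjugate) * (Z.adjugate * Z) := by
          simp only [Matrix.adjugate_mul_distrib, mul_assoc]
      _ = (Z * A).det • 1 := by
          rw [Matrix.mul_adjugate, Matrix.adjugate_mul, smul_mul_smul, mul_one, Matrix.det_mul,
            mul_comm]
  · intro h
    have h' : Mt.adjugate * Z * A = Mt.det • 1 := by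
      calc Mt.adjugate * Z * A = A⁻¹ * (A * Mt.adjugate * Z) * A := by
            simp only [← mul_assoc, Matrix.nonsing_inv_mul _ hA.isUnit_det, one_mul]
        _ = Mt.det • 1 := by
            rw [h, Matrix.mul_smul, mul_one, Matrix.smul_mul,
              Matrix.nonsing_inv_mul _ hA.isUnit_det]
    apply smul_right_injective M2 hMt
    calc Mt.det • (Z * A) = Mt * (Mt.adjugate * Z * A) := by
          rw [← mul_assoc, ← mul_assoc, Matrix.mul_adjugate, Matrix.smul_mul, one_mul,
            Matrix.smul_mul]
      _ = Mt.det • Mt := by rw [h', Matrix.mul_smul, mul_one]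

theorem solutions_regular_general_general (k : ℕ) (M : Fin k → M2) (Mt : M2)
    (hMt : Mt.det ≠ 0)
    (S : Fin k → Set M2) (hS : ∀ i, RegularSubset (S i)) :
    RegularSubset {A : M2 | IsGL A ∧ ∃ As : Fin k → M2, (∀ i, As i ∈ S i) ∧
      (List.ofFn (fun i : Fin k => As i * M i)).prod * A = Mt} := by
  choose L hL hLS using hS
  let ps := List.ofFn fun i => (L i, M i)
  have hps : ∀ p ∈ ps, p.1.IsRegular := by
    simp only [ps, List.mem_ofFn]
    rintro _ ⟨i, rfl⟩
    exact hL i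
  have hX₁ : (Mt.det • (1 : M2)).det ≠ 0 := by
    rw [Matrix.det_smul, Matrix.det_one, mul_one, Fintype.card_fin]
    exact pow_ne_zero 2 hMt
  convert regularSubset_setOf_mul_labelledPath_eq (chainEdges ps) (finite_chainEdges hps) ps []
    Mt.adjugate (Mt.det • 1) hX₁ using 1
  ext A
  refine and_congr_right fun hA => ?_
  simp only [← mul_eq_iff_mul_adjugate_mul_eq hA hMt, labelledPath_chainEdges_iff, ps,
    mem_chainProduct_ofFn, hLS]
  constructor
  · rintro ⟨As, hAs, h⟩
    exact ⟨_, ⟨As, hAs, rfl⟩, h⟩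
  · rintro ⟨_, ⟨As, hAs, rfl⟩, h⟩
    exact ⟨As, hAs, h⟩

/-- General case: for `t = k + 1 ≥ 2`, nonsingular matrices `M₁, …, M_k, M_t` and regular
subsets `𝒮₁, …, 𝒮_k` of GL(2,ℤ), the set of `A ∈ GL(2,ℤ)` such that
`A₁ M₁ A₂ M₂ ⋯ A_k M_k A = M_t` for some `Aᵢ ∈ 𝒮ᵢ` is a regular subset of GL(2,ℤ). -/
theorem solutions_regular_general (k : ℕ) (hk : 1 ≤ k) (M : Fin k → M2) (Mt : M2)
    (hM : ∀ i, (M i).det ≠ 0) (hMt : Mt.det ≠ 0)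
    (S : Fin k → Set M2) (hS : ∀ i, RegularSubset (S i)) :
    RegularSubset {A : M2 | IsGL A ∧ ∃ As : Fin k → M2, (∀ i, As i ∈ S i) ∧
      (List.ofFn (fun i : Fin k => As i * M i)).prod * A = Mt} :=
  solutions_regular_general_general k M Mt hMt S hS
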